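/- Let u and u' be symplectic transformations of E with the same minimal polynomial d = d₁·d₂, where d₁, d₂ ∈ K[X] are coprime and reverse(dᵢ) = cᵢ • dᵢ for nonzero cᵢ ∈ K (i = 1,2), and suppose ker d₁(u) = ker d₁(u') = E₁ and ker d₂(u) = ker d₂(u') = E₂. Then there exists a symplectic transformation w of E with u' = w ∘ u ∘ w⁻¹ if and only if for each i ∈ {1,2} there exists a K-linear automorphism wᵢ of Eᵢ preserving the restriction of ⟨·,·⟩ to Eᵢ such that the restriction of u' to Eᵢ equals wᵢ ∘ (restriction of u to Eᵢ) ∘ wᵢ⁻¹. -/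

import Mathlib

/-!
Since `d₁(u) d₂(u) = 0` with `d₁, d₂` coprime, `E = E₁ ⊕ E₂`. As `u` preserves the form, `p(u)`
is adjoint to `p(u⁻¹)`, and since `d₂` is self-reciprocal, `d₂(u⁻¹)` vanishes on `E₂`. Writing
`x ∈ E₁` as `(b d₂)(u) x` with `a d₁ + b d₂ = 1` then gives `⟨x, y⟩ = 0` for `y ∈ E₂`: the
decomposition is orthogonal. Hence isometries `wᵢ` of the `Eᵢ` conjugating `u|Eᵢ` to `u'|Eᵢ` glue
to an isometry `w₁ ⊕ w₂` of `E` conjugating `u` to `u'`. Conversely, if `u' = w u w⁻¹` then `w`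
maps `ker dᵢ(u)` onto `ker dᵢ(u')`, so it preserves each `Eᵢ` and restricts to the `wᵢ`.
-/

open Polynomial

namespace Polynomial

variable {R A : Type*} [CommSemiring R] [Semiring A] [Algebra R A]

theorem pow_mul_aeval_inv_reflect (x : Aˣ) (N : ℕ) (f : R[X]) (hf : f.natDegree ≤ N) :
    (x : A) ^ N * aeval (↑x⁻¹ : A) (reflect N f) = aeval (x : A) f := by
  refine induction_with_natDegree_le
    (fun f => (x : A) ^ N * aeval (↑x⁻¹ : A) (reflect N f) = aeval (x : A) f) N ?_ ?_ ?_ f hf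
  · simp
  · intro n r _ hnN
    have hpow : x ^ N * x⁻¹ ^ (N - n) = x ^ n := by
      rw [← Nat.add_sub_cancel' hnN, pow_add, Nat.add_sub_cancel_left, inv_pow,
        mul_inv_cancel_right]
    simp only [revAt_le hnN, reflect_C_mul_X_pow, map_mul, aeval_C, map_pow, aeval_X,
      ← Units.val_pow_eq_pow_val]
    rw [Algebra.left_comm, ← Units.val_mul, hpow]
  · intro f g _ _ hf hg
    rw [reflect_add, map_add, mul_add, hf, hg, map_add]

end Polynomial

section Endomorphisms

variable {R M N : Type*} [CommRing R] [AddCommGroup M] [Module R M] [AddCommGroup N] [Module R N]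

theorem ker_aeval_le_ker_aeval_symm_of_reverse_eq_smul (u : M ≃ₗ[R] M) {f : R[X]} {c : R}
    (hf : f.reverse = c • f) :
    LinearMap.ker (aeval (u : Module.End R M) f) ≤
      LinearMap.ker (aeval (u.symm : Module.End R M) f) := by
  intro x hx
  rw [LinearMap.mem_ker] at hx ⊢
  have h := pow_mul_aeval_inv_reflect (LinearMap.GeneralLinearGroup.ofLinearEquiv u.symm)
    f.natDegree f le_rfl
  change (u.symm : Module.End R M) ^ f.natDegree * aeval (u : Module.End R M) f.reverse =
    aeval (u.symm : Module.End R M) f at h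
  rw [← h, hf, map_smul, Module.End.mul_apply, LinearMap.smul_apply, hx, smul_zero, map_zero]

theorem isAdjointPair_aeval_symm (B : M →ₗ[R] M →ₗ[R] N) (u : M ≃ₗ[R] M)
    (hu : ∀ x y, B (u x) (u y) = B x y) (p : R[X]) :
    LinearMap.IsAdjointPair B B (aeval (u : Module.End R M) p)
      (aeval (u.symm : Module.End R M) p) := by
  have hu' : LinearMap.IsAdjointPair B B (u : Module.End R M) (u.symm : Module.End R M) :=
    fun x y => by simpa using hu x (u.symm y)
  have hpow (n : ℕ) : LinearMap.IsAdjointPair B B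
      ⇑((u : Module.End R M) ^ n) ⇑((u.symm : Module.End R M) ^ n) := by
    induction n with
    | zero => exact LinearMap.isAdjointPair_one
    | succ n ih =>
      rw [pow_succ, pow_succ']
      exact ih.mul hu'
  induction p using Polynomial.induction_on' with
  | add p q hp hq => rw [map_add, map_add]; exact hp.add hq
  | monomial n a =>
    simp only [aeval_monomial, Algebra.algebraMap_eq_smul_one, smul_mul_assoc, one_mul]
    exact (hpow n).smul a

theorem apply_eq_zero_of_mem_ker_aeval_of_isCoprime (B : M →ₗ[R] M →ₗ[R] N) (u : M ≃ₗ[R] M)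
    (hu : ∀ x y, B (u x) (u y) = B x y) {f g : R[X]} (hfg : IsCoprime f g) {c : R}
    (hg : g.reverse = c • g) {x y : M} (hx : x ∈ LinearMap.ker (aeval (u : Module.End R M) f))
    (hy : y ∈ LinearMap.ker (aeval (u : Module.End R M) g)) : B x y = 0 := by
  obtain ⟨a, b, hab⟩ := hfg
  have hy' := ker_aeval_le_ker_aeval_symm_of_reverse_eq_smul u hg hy
  rw [LinearMap.mem_ker] at hx hy'
  have hx' : aeval (u : Module.End R M) (b * g) x = x := by
    simpa [hx] using congr($(congrArg (aeval (u : Module.End R M)) hab) x)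
  rw [← hx', isAdjointPair_aeval_symm B u hu, map_mul, Module.End.mul_apply, hy',
    map_zero, map_zero]

theorem map_ker_aeval_of_conj (w u u' : M ≃ₗ[R] M) (hconj : ∀ x, u' x = w (u (w.symm x)))
    (p : R[X]) :
    (LinearMap.ker (aeval (u : Module.End R M) p)).map (w : M →ₗ[R] M) =
      LinearMap.ker (aeval (u' : Module.End R M) p) := by
  have hu' : (u' : Module.End R M) = w.conjAlgEquiv R u := LinearMap.ext hconj
  rw [hu', aeval_algHom_apply, LinearEquiv.conjAlgEquiv_apply,
    LinearEquiv.ker_comp, LinearMap.ker_comp, Submodule.map_equiv_eq_comap_symm]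

theorem isCompl_ker_aeval_of_isCoprime (f : Module.End R M) {p q : R[X]} (hpq : IsCoprime p q)
    (hf : aeval f (p * q) = 0) :
    IsCompl (LinearMap.ker (aeval f p)) (LinearMap.ker (aeval f q)) := by
  refine ⟨disjoint_ker_aeval_of_isCoprime f hpq, codisjoint_iff.2 ?_⟩
  rw [sup_ker_aeval_eq_ker_aeval_mul_of_coprime f hpq, hf, LinearMap.ker_zero]

theorem exists_restrict_conj_of_map_eq (B : M →ₗ[R] M →ₗ[R] N) (w u u' : M ≃ₗ[R] M)
    (hw : ∀ x y, B (w x) (w y) = B x y) (hconj : ∀ x, u' x = w (u (w.symm x)))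
    {p : Submodule R M} (hwp : p.map (w : M →ₗ[R] M) = p)
    (hup : ∀ x ∈ p, (u : M →ₗ[R] M) x ∈ p) :
    ∃ w₁ : p ≃ₗ[R] p, (∀ x y : p, B (w₁ x) (w₁ y) = B x y) ∧
      ∀ x : p, u' x = w₁ ((u : M →ₗ[R] M).restrict hup (w₁.symm x)) :=
  ⟨w.ofSubmodules p p hwp, fun x y => hw x y, fun x => hconj x⟩

end Endomorphisms

namespace LinearEquiv

section Ring

variable {R M : Type*} [Ring R] [AddCommGroup M] [Module R M] {p q : Submodule R M}

noncomputable def ofIsCompl (h : IsCompl p q) (e₁ : p ≃ₗ[R] p) (e₂ : q ≃ₗ[R] q) : M ≃ₗ[R] M :=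
  (p.prodEquivOfIsCompl q h).symm ≪≫ₗ e₁.prodCongr e₂ ≪≫ₗ p.prodEquivOfIsCompl q h

variable (h : IsCompl p q) (e₁ : p ≃ₗ[R] p) (e₂ : q ≃ₗ[R] q)

@[simp]
theorem ofIsCompl_apply_left (x : p) : ofIsCompl h e₁ e₂ x = e₁ x := by
  simp [ofIsCompl]

@[simp]
theorem ofIsCompl_apply_right (x : q) : ofIsCompl h e₁ e₂ x = e₂ x := by
  simp [ofIsCompl]

theorem ofIsCompl_apply_add (x₁ : p) (x₂ : q) :
    ofIsCompl h e₁ e₂ (x₁ + x₂) = e₁ x₁ + e₂ x₂ := by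
  rw [map_add, ofIsCompl_apply_left, ofIsCompl_apply_right]

theorem ofIsCompl_symm_apply_left (x : p) : (ofIsCompl h e₁ e₂).symm x = e₁.symm x := by
  rw [symm_apply_eq, ofIsCompl_apply_left, apply_symm_apply]

theorem ofIsCompl_symm_apply_right (x : q) : (ofIsCompl h e₁ e₂).symm x = e₂.symm x := by
  rw [symm_apply_eq, ofIsCompl_apply_right, apply_symm_apply]

theorem apply_eq_ofIsCompl_conj (u u' : M →ₗ[R] M) (hup : ∀ x ∈ p, u x ∈ p)
    (huq : ∀ x ∈ q, u x ∈ q)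
    (h₁ : ∀ x : p, u' x = e₁ (u.restrict hup (e₁.symm x)))
    (h₂ : ∀ x : q, u' x = e₂ (u.restrict huq (e₂.symm x))) (x : M) :
    u' x = ofIsCompl h e₁ e₂ (u ((ofIsCompl h e₁ e₂).symm x)) := by
  obtain ⟨x₁, x₂, rfl, -⟩ := Submodule.existsUnique_add_of_isCompl h x
  rw [map_add, map_add, ofIsCompl_symm_apply_left, ofIsCompl_symm_apply_right, h₁, h₂,
    ← ofIsCompl_apply_add h, map_add u]
  rfl

end Ring

section CommRing

variable {R M N : Type*} [CommRing R] [AddCommGroup M] [Module R M] [AddCommGroup N] [Module R N]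
  {p q : Submodule R M} (h : IsCompl p q) {e₁ : p ≃ₗ[R] p} {e₂ : q ≃ₗ[R] q}

theorem apply_ofIsCompl_apply_ofIsCompl (B : M →ₗ[R] M →ₗ[R] N) (hpq : ∀ x ∈ p, ∀ y ∈ q, B x y = 0)
    (hqp : ∀ x ∈ q, ∀ y ∈ p, B x y = 0) (he₁ : ∀ x y : p, B (e₁ x) (e₁ y) = B x y)
    (he₂ : ∀ x y : q, B (e₂ x) (e₂ y) = B x y) (x y : M) :
    B (ofIsCompl h e₁ e₂ x) (ofIsCompl h e₁ e₂ y) = B x y := by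
  have hsplit (x₁ y₁ : p) (x₂ y₂ : q) : B (x₁ + x₂) (y₁ + y₂) = B x₁ y₁ + B x₂ y₂ := by
    simp only [map_add, LinearMap.add_apply, hpq _ x₁.2 _ y₂.2, hqp _ x₂.2 _ y₁.2, add_zero,
      zero_add]
  obtain ⟨x₁, x₂, rfl, -⟩ := Submodule.existsUnique_add_of_isCompl h x
  obtain ⟨y₁, y₂, rfl, -⟩ := Submodule.existsUnique_add_of_isCompl h y
  rw [ofIsCompl_apply_add, ofIsCompl_apply_add, hsplit, hsplit, he₁, he₂]

end CommRing

end LinearEquiv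

theorem stmt_7_general {K E : Type*} [Field K]
    [AddCommGroup E] [Module K E]
    (B : E →ₗ[K] E →ₗ[K] K)
    (u u' : E ≃ₗ[K] E)
    (hu : ∀ x y, B (u x) (u y) = B x y)
    (d₁ d₂ : K[X]) (hcop : IsCoprime d₁ d₂)
    (c₁ c₂ : K)
    (hrev₁ : d₁.reverse = c₁ • d₁) (hrev₂ : d₂.reverse = c₂ • d₂)
    (hmin : minpoly K (u : Module.End K E) = d₁ * d₂)
    (E₁ E₂ : Submodule K E)
    (hE₁ : E₁ = LinearMap.ker (aeval (u : Module.End K E) d₁))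
    (hE₁' : E₁ = LinearMap.ker (aeval (u' : Module.End K E) d₁))
    (hE₂ : E₂ = LinearMap.ker (aeval (u : Module.End K E) d₂))
    (hE₂' : E₂ = LinearMap.ker (aeval (u' : Module.End K E) d₂))
    (hu₁ : ∀ x ∈ E₁, (u : E →ₗ[K] E) x ∈ E₁) (hu₂ : ∀ x ∈ E₂, (u : E →ₗ[K] E) x ∈ E₂) :
    (∃ w : E ≃ₗ[K] E, (∀ x y, B (w x) (w y) = B x y) ∧ ∀ x, u' x = w (u (w.symm x))) ↔
      ((∃ w₁ : E₁ ≃ₗ[K] E₁, (∀ x y : E₁, B (w₁ x : E) (w₁ y : E) = B (x : E) (y : E)) ∧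
          ∀ x : E₁, u' (x : E) = (w₁ (((u : E →ₗ[K] E).restrict hu₁) (w₁.symm x)) : E)) ∧
       (∃ w₂ : E₂ ≃ₗ[K] E₂, (∀ x y : E₂, B (w₂ x : E) (w₂ y : E) = B (x : E) (y : E)) ∧
          ∀ x : E₂, u' (x : E) = (w₂ (((u : E →ₗ[K] E).restrict hu₂) (w₂.symm x)) : E))) := by
  have hcompl : IsCompl E₁ E₂ := by
    rw [hE₁, hE₂]
    exact isCompl_ker_aeval_of_isCoprime _ hcop (hmin ▸ minpoly.aeval K _)
  have h₁₂ : ∀ x ∈ E₁, ∀ y ∈ E₂, B x y = 0 := fun x hx y hy =>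
    apply_eq_zero_of_mem_ker_aeval_of_isCoprime B u hu hcop hrev₂ (hE₁ ▸ hx) (hE₂ ▸ hy)
  have h₂₁ : ∀ x ∈ E₂, ∀ y ∈ E₁, B x y = 0 := fun x hx y hy =>
    apply_eq_zero_of_mem_ker_aeval_of_isCoprime B u hu hcop.symm hrev₁ (hE₂ ▸ hx) (hE₁ ▸ hy)
  constructor
  · rintro ⟨w, hw, hconj⟩
    have hwE (p : K[X]) (F : Submodule K E)
        (hF : F = LinearMap.ker (aeval (u : Module.End K E) p))
        (hF' : F = LinearMap.ker (aeval (u' : Module.End K E) p)) :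
        F.map (w : E →ₗ[K] E) = F := by
      rw [hF, map_ker_aeval_of_conj w u u' hconj, ← hF, ← hF']
    exact ⟨exists_restrict_conj_of_map_eq B w u u' hw hconj (hwE d₁ E₁ hE₁ hE₁') hu₁,
      exists_restrict_conj_of_map_eq B w u u' hw hconj (hwE d₂ E₂ hE₂ hE₂') hu₂⟩
  · rintro ⟨⟨w₁, hw₁, hconj₁⟩, ⟨w₂, hw₂, hconj₂⟩⟩
    exact ⟨LinearEquiv.ofIsCompl hcompl w₁ w₂,
      LinearEquiv.apply_ofIsCompl_apply_ofIsCompl hcompl B h₁₂ h₂₁ hw₁ hw₂,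
      LinearEquiv.apply_eq_ofIsCompl_conj hcompl w₁ w₂ _ _ hu₁ hu₂ hconj₁ hconj₂⟩

/-- Two symplectic transformations `u`, `u'` with the same minimal polynomial `d₁ * d₂`
(`d₁, d₂` coprime, `reverse dᵢ = cᵢ • dᵢ`) and the same subspaces `E₁ = ker d₁`, `E₂ = ker d₂`
are conjugate by a symplectic transformation of `E` iff for each `i` the restrictions of `u` and
`u'` to `Eᵢ` are conjugate by an automorphism of `Eᵢ` preserving the restricted form. -/
theorem stmt_7 {K E : Type*} [Field K] (hchar : (2 : K) ≠ 0)
    [AddCommGroup E] [Module K E] [FiniteDimensional K E]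
    (B : E →ₗ[K] E →ₗ[K] K) (halt : ∀ x, B x x = 0)
    (hnd : ∀ x, (∀ y, B x y = 0) → x = 0)
    (u u' : E ≃ₗ[K] E)
    (hu : ∀ x y, B (u x) (u y) = B x y) (hu' : ∀ x y, B (u' x) (u' y) = B x y)
    (d₁ d₂ : K[X]) (hcop : IsCoprime d₁ d₂)
    (c₁ c₂ : K) (hc₁ : c₁ ≠ 0) (hc₂ : c₂ ≠ 0)
    (hrev₁ : d₁.reverse = c₁ • d₁) (hrev₂ : d₂.reverse = c₂ • d₂)
    (hmin : minpoly K (u : Module.End K E) = d₁ * d₂)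
    (hmin' : minpoly K (u' : Module.End K E) = d₁ * d₂)
    (E₁ E₂ : Submodule K E)
    (hE₁ : E₁ = LinearMap.ker (aeval (u : Module.End K E) d₁))
    (hE₁' : E₁ = LinearMap.ker (aeval (u' : Module.End K E) d₁))
    (hE₂ : E₂ = LinearMap.ker (aeval (u : Module.End K E) d₂))
    (hE₂' : E₂ = LinearMap.ker (aeval (u' : Module.End K E) d₂))
    (hu₁ : ∀ x ∈ E₁, (u : E →ₗ[K] E) x ∈ E₁) (hu₂ : ∀ x ∈ E₂, (u : E →ₗ[K] E) x ∈ E₂) :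
    (∃ w : E ≃ₗ[K] E, (∀ x y, B (w x) (w y) = B x y) ∧ ∀ x, u' x = w (u (w.symm x))) ↔
      ((∃ w₁ : E₁ ≃ₗ[K] E₁, (∀ x y : E₁, B (w₁ x : E) (w₁ y : E) = B (x : E) (y : E)) ∧
          ∀ x : E₁, u' (x : E) = (w₁ (((u : E →ₗ[K] E).restrict hu₁) (w₁.symm x)) : E)) ∧
       (∃ w₂ : E₂ ≃ₗ[K] E₂, (∀ x y : E₂, B (w₂ x : E) (w₂ y : E) = B (x : E) (y : E)) ∧
          ∀ x : E₂, u' (x : E) = (w₂ (((u : E →ₗ[K] E).restrict hu₂) (w₂.symm x)) : E))) :=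
  stmt_7_general B u u' hu d₁ d₂ hcop c₁ c₂ hrev₁ hrev₂ hmin E₁ E₂ hE₁ hE₁' hE₂ hE₂' hu₁ hu₂
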